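/- Let π: L̂ → L be a central extension of Lie superalgebras over a field of characteristic zero, and let h ⊆ L be an abelian subalgebra with L = ⊕_{α ∈ Δ∪{0}} L_α as a weight decomposition with respect to h (Δ a finite subset of h*\{0}), with L_0 = Σ_{α∈Δ}[L_α, L_{-α}]. Fix h ∈ h and h' ∈ π⁻¹(h). If m(t) is the minimal polynomial of ad h on L, then the minimal polynomial of ad h' on L̂ divides t·m(t). -/

import Mathlib

/-!
Since `π` is a homomorphism, `π ∘ ad h' = ad h₀ ∘ π`, so `m(ad h')` maps `L̂` into `ker π`, which
is central. A central element `z` is also killed by `ad h'` from the other side: its homogeneous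
components are central because the grading is a direct sum, and super skew-symmetry then gives
`[x, z] = 0` for every `x`. Hence `ad h' ∘ m(ad h') = 0`.
-/

universe u v

/-- A Lie superalgebra over a field `F`: a `Z₂`-graded vector space with a bilinear
bracket that respects the grading and satisfies super-skew-symmetry and the
super Jacobi identity on homogeneous elements. -/
class LieSuperAlgebra (F : Type u) (L : Type v) [Field F] [AddCommGroup L] [Module F L] where
  grading : ZMod 2 → Submodule F L
  bracket : L →ₗ[F] L →ₗ[F] L
  grading_sup : grading 0 ⊔ grading 1 = ⊤
  grading_inf : grading 0 ⊓ grading 1 = ⊥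
  bracket_mem : ∀ i j : ZMod 2, ∀ x ∈ grading i, ∀ y ∈ grading j, bracket x y ∈ grading (i + j)
  super_skew : ∀ i j : ZMod 2, ∀ x ∈ grading i, ∀ y ∈ grading j,
    bracket x y = -(((-1 : F) ^ (i * j).val) • bracket y x)
  super_jacobi : ∀ i j : ZMod 2, ∀ x ∈ grading i, ∀ y ∈ grading j, ∀ z : L,
    bracket x (bracket y z) =
      bracket (bracket x y) z + ((-1 : F) ^ (i * j).val) • bracket y (bracket x z)

namespace LieSuperAlgebra

variable (F : Type u) {L L' : Type v} [Field F] [AddCommGroup L] [Module F L]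
  [LieSuperAlgebra F L] [AddCommGroup L'] [Module F L'] [LieSuperAlgebra F L']

/-- The bracket, as a binary operation. -/
def br (x y : L) : L := bracket (F := F) x y

/-- The center of a Lie superalgebra. -/
def center : Submodule F L where
  carrier := {z | ∀ x : L, br F z x = 0}
  add_mem' := by
    intro a b ha hb x
    simp only [br, map_add, LinearMap.add_apply] at *
    rw [ha x, hb x, add_zero]
  zero_mem' := by intro x; simp [br]
  smul_mem' := by
    intro c a ha x
    simp only [br, map_smul, LinearMap.smul_apply] at *
    rw [ha x, smul_zero]

/-- A Lie superalgebra is perfect if it is spanned by brackets. -/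
def IsPerfect : Prop :=
  Submodule.span F {z : L | ∃ x y : L, z = br F x y} = ⊤

/-- A homomorphism of Lie superalgebras: a linear map preserving brackets and the grading. -/
def IsHom (f : L →ₗ[F] L') : Prop :=
  (∀ x y : L, f (br F x y) = br F (f x) (f y)) ∧
    ∀ i : ZMod 2, (grading (F := F) (L := L) i).map f ≤ grading (F := F) (L := L') i

/-- A central extension: a surjective homomorphism whose kernel is central. -/
def IsCentralExtension (π : L →ₗ[F] L') : Prop :=
  IsHom F π ∧ Function.Surjective π ∧ ∀ x : L, π x = 0 → x ∈ center F (L := L)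

end LieSuperAlgebra

namespace LieSuperAlgebra

/-- The weight space of `L` of weight `α` relative to an abelian subalgebra `h`. -/
def weightSpace (F : Type u) {L : Type v} [Field F] [AddCommGroup L] [Module F L]
    [LieSuperAlgebra F L] (h : Submodule F L) (α : Module.Dual F h) : Submodule F L where
  carrier := {x | ∀ y : h, br F (y : L) x = α y • x}
  add_mem' := by
    intro a b ha hb y
    simp only [br, map_add] at *
    rw [ha y, hb y, smul_add]
  zero_mem' := by intro y; simp [br]
  smul_mem' := by
    intro c a ha y
    simp only [br, map_smul] at *
    rw [ha y, smul_comm]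

end LieSuperAlgebra

open Polynomial in
theorem LinearMap.comp_aeval_eq_aeval_comp {R M N : Type*} [CommSemiring R] [AddCommMonoid M]
    [Module R M] [AddCommMonoid N] [Module R N] {f : M →ₗ[R] N} {g : Module.End R M}
    {g₂ : Module.End R N} (h : f ∘ₗ g = g₂ ∘ₗ f) (p : R[X]) :
    f ∘ₗ aeval g p = aeval g₂ p ∘ₗ f := by
  induction p using Polynomial.induction_on' with
  | add p q hp hq => simp only [map_add, LinearMap.comp_add, LinearMap.add_comp, hp, hq]
  | monomial n a =>
    simp only [aeval_monomial, Module.algebraMap_end_eq_smul_id, smul_mul_assoc,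
      LinearMap.comp_smul, LinearMap.smul_comp, Module.End.mul_eq_comp, LinearMap.id_comp,
      Module.End.commute_pow_left_of_commute h.symm n]

open Polynomial in
theorem Module.End.minpoly_dvd_X_mul_of_comp_eq {K M N : Type*} [Field K] [AddCommGroup M]
    [Module K M] [AddCommGroup N] [Module K N] {f : M →ₗ[K] N} {g : Module.End K M}
    {g₂ : Module.End K N} (h : f ∘ₗ g = g₂ ∘ₗ f) (hker : ∀ x, f x = 0 → g x = 0) :
    minpoly K g ∣ X * minpoly K g₂ := by
  refine minpoly.dvd K g ?_
  rw [map_mul, aeval_X]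
  refine LinearMap.ext fun x ↦ hker _ ?_
  calc f (aeval g (minpoly K g₂) x) = aeval g₂ (minpoly K g₂) (f x) :=
        LinearMap.congr_fun (LinearMap.comp_aeval_eq_aeval_comp h _) x
    _ = 0 := by rw [minpoly.aeval, LinearMap.zero_apply]

namespace LieSuperAlgebra

variable {F : Type u} {L : Type v} [Field F] [AddCommGroup L] [Module F L] [LieSuperAlgebra F L]

theorem disjoint_grading {i j : ZMod 2} (hij : i ≠ j) :
    Disjoint (grading (F := F) (L := L) i) (grading j) := by
  rw [disjoint_iff]
  fin_cases i <;> fin_cases j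
  · exact absurd rfl hij
  · exact grading_inf
  · exact inf_comm (grading (F := F) (L := L) 1) _ ▸ grading_inf
  · exact absurd rfl hij

theorem eq_zero_of_add_eq_zero_of_mem_grading {i j : ZMod 2} (hij : i ≠ j) {a b : L}
    (ha : a ∈ grading (F := F) i) (hb : b ∈ grading (F := F) j) (hab : a + b = 0) : a = 0 :=
  Submodule.disjoint_def.mp (disjoint_grading hij) a ha <|
    eq_neg_of_add_eq_zero_left hab ▸ neg_mem hb

theorem exists_homogeneous_add_eq (x : L) :
    ∃ x₀ ∈ grading (F := F) (L := L) 0, ∃ x₁ ∈ grading (F := F) (L := L) 1, x₀ + x₁ = x :=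
  Submodule.mem_sup.mp (grading_sup (F := F) (L := L) ▸ Submodule.mem_top)

theorem linearMap_ext_homogeneous {M : Type*} [AddCommGroup M] [Module F M] {f g : L →ₗ[F] M}
    (h : ∀ i, ∀ y ∈ grading (F := F) (L := L) i, f y = g y) : f = g := by
  ext x
  obtain ⟨x₀, hx₀, x₁, hx₁, rfl⟩ := exists_homogeneous_add_eq (F := F) x
  rw [map_add, map_add, h 0 x₀ hx₀, h 1 x₁ hx₁]

theorem mem_center_of_add_mem_center {z₀ z₁ : L} (hz₀ : z₀ ∈ grading (F := F) 0)
    (hz₁ : z₁ ∈ grading (F := F) 1) (hz : z₀ + z₁ ∈ center F) :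
    z₀ ∈ center F ∧ z₁ ∈ center F := by
  have homogeneous : ∀ i, ∀ y ∈ grading (F := F) (L := L) i, br F z₀ y = 0 ∧ br F z₁ y = 0 := by
    intro i y hy
    have hsum : br F z₀ y + br F z₁ y = 0 := by
      simpa only [br, map_add, LinearMap.add_apply] using hz y
    have h₀ : br F z₀ y = 0 :=
      eq_zero_of_add_eq_zero_of_mem_grading (fun h ↦ zero_ne_one (add_right_cancel h))
        (bracket_mem 0 i z₀ hz₀ y hy) (bracket_mem 1 i z₁ hz₁ y hy) hsum
    exact ⟨h₀, by rwa [h₀, zero_add] at hsum⟩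
  have h₀ : bracket (F := F) z₀ = 0 :=
    linearMap_ext_homogeneous fun i y hy ↦ (homogeneous i y hy).1
  have h₁ : bracket (F := F) z₁ = 0 :=
    linearMap_ext_homogeneous fun i y hy ↦ (homogeneous i y hy).2
  exact ⟨LinearMap.congr_fun h₀, LinearMap.congr_fun h₁⟩

theorem br_eq_zero_of_mem_center_of_mem_grading {j : ZMod 2} {z : L} (hz : z ∈ center F)
    (hzj : z ∈ grading (F := F) j) (x : L) : br F x z = 0 := by
  have : (bracket (F := F) (L := L)).flip z = 0 := linearMap_ext_homogeneous fun i y hy ↦ by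
    rw [LinearMap.flip_apply, super_skew i j y hy z hzj, LinearMap.zero_apply]
    simp only [show bracket z y = 0 from hz y, smul_zero, neg_zero]
  exact LinearMap.congr_fun this x

theorem br_eq_zero_of_mem_center {z : L} (hz : z ∈ center F) (x : L) : br F x z = 0 := by
  obtain ⟨z₀, hz₀, z₁, hz₁, rfl⟩ := exists_homogeneous_add_eq (F := F) z
  obtain ⟨hc₀, hc₁⟩ := mem_center_of_add_mem_center hz₀ hz₁ hz
  have e₀ := br_eq_zero_of_mem_center_of_mem_grading hc₀ hz₀ x
  have e₁ := br_eq_zero_of_mem_center_of_mem_grading hc₁ hz₁ x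
  simp only [br, map_add] at e₀ e₁ ⊢
  rw [e₀, e₁, add_zero]

end LieSuperAlgebra

open LieSuperAlgebra Polynomial in
theorem minpoly_lift_dvd_general {F : Type u} {Lh L : Type v} [Field F]
    [AddCommGroup Lh] [Module F Lh] [LieSuperAlgebra F Lh]
    [AddCommGroup L] [Module F L] [LieSuperAlgebra F L]
    (π : Lh →ₗ[F] L) (hπ : IsCentralExtension F π)
    (h : Submodule F L)
    (h₀ : h) (h' : Lh) (hlift : π h' = (h₀ : L)) :
    minpoly F (bracket (F := F) h' : Module.End F Lh) ∣
      X * (minpoly F (bracket (F := F) ((h₀ : L)) : Module.End F L)) := by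
  have hcomm : π ∘ₗ bracket h' = bracket (h₀ : L) ∘ₗ π :=
    LinearMap.ext fun x ↦ by simpa only [br, hlift, LinearMap.comp_apply] using hπ.1.1 h' x
  exact Module.End.minpoly_dvd_X_mul_of_comp_eq hcomm fun x hx ↦
    br_eq_zero_of_mem_center (hπ.2.2 x hx) h'

open LieSuperAlgebra Polynomial in
/-- If `π : L̂ → L` is a central extension, `L` has a finite weight decomposition relative
to an abelian subalgebra `h`, `h₀ ∈ h` and `π h' = h₀`, and `m(t)` is the minimal
polynomial of `ad h₀` on `L`, then the minimal polynomial of `ad h'` on `L̂`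
divides `t·m(t)`. -/
theorem minpoly_lift_dvd {F : Type u} {Lh L : Type v} [Field F]
    [AddCommGroup Lh] [Module F Lh] [LieSuperAlgebra F Lh]
    [AddCommGroup L] [Module F L] [LieSuperAlgebra F L]
    (π : Lh →ₗ[F] L) (hπ : IsCentralExtension F π)
    (h : Submodule F L) (hh0 : h ≤ grading (F := F) (L := L) 0)
    (habelian : ∀ x y : h, br F (x : L) (y : L) = 0)
    (Δ : Set (Module.Dual F h)) (hfin : Δ.Finite) (h0 : (0 : Module.Dual F h) ∉ Δ)
    (hsum : weightSpace F h 0 ⊔ (⨆ α ∈ Δ, weightSpace F h α) = ⊤)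
    (hzero : weightSpace F h 0 = Submodule.span F
        {z : L | ∃ α ∈ Δ, ∃ x ∈ weightSpace F h α, ∃ y ∈ weightSpace F h (-α), z = br F x y})
    (h₀ : h) (h' : Lh) (hlift : π h' = (h₀ : L))
    (hint : IsIntegral F (bracket (F := F) ((h₀ : L)) : Module.End F L)) :
    minpoly F (bracket (F := F) h' : Module.End F Lh) ∣
      X * (minpoly F (bracket (F := F) ((h₀ : L)) : Module.End F L)) :=
  minpoly_lift_dvd_general π hπ h h₀ h' hlift
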